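/- For each prime $p$ and integer $s \ge 3$, let $n(p^l)$ be the number of pairs $(\mathbf{x}, \mathbf{y}) \in (\mathbb{Z}/p^l\mathbb{Z})^s \times (\mathbb{Z}/p^l\mathbb{Z})^s$ with $x_1 y_1^2 + \cdots + x_s y_s^2 \equiv 0 \pmod{p^l}$. Then $\lim_{l \to \infty} p^{-(2s-1)l} n(p^l) = \frac{1 - p^{-s}}{1 - p^{2-s}}$. -/

import Mathlib

/-!
Orthogonality of the additive characters of `ZMod N` gives `N · n(N) = N^s ∑_t w(t)^s`, where
`w(t)` is the number of `u` with `t u² = 0`. For `N = p^l`, `w(t)` only depends on the additive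
order `p^k` of `t`: it is `p^(l - ⌈k/2⌉)`, and `φ(p^k)` elements `t` have that order. So the
normalised count `p^(-(2s-1)l) n(p^l)` is the partial sum `∑_{k ≤ l} φ(p^k) p^(-s⌈k/2⌉)` of a
series which, split by the parity of `k`, is geometric with ratio `p^(2-s)`.
-/

open Finset

theorem AddChar.map_sum_eq_prod {ι A M : Type*} [AddCommMonoid A] [CommMonoid M]
    (ψ : AddChar A M) (s : Finset ι) (f : ι → A) :
    ψ (∑ i ∈ s, f i) = ∏ i ∈ s, ψ (f i) :=
  map_prod ψ.toMonoidHom (Multiplicative.ofAdd ∘ f) s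

section CharacterSums

variable {R ι : Type*} [CommRing R] [Fintype R] [DecidableEq R] [Fintype ι] [DecidableEq ι]

theorem AddChar.IsPrimitive.card_mul_card_dotProduct_eq_zero {ψ : AddChar R ℂ}
    (hψ : ψ.IsPrimitive) (c : ι → R) :
    Fintype.card R * #{x : ι → R | x ⬝ᵥ c = 0} =
      Fintype.card R ^ Fintype.card ι * #{t : R | ∀ i, t * c i = 0} := by
  have orthogonality (z : R) :
      ∑ t, ψ (t * z) = if z = 0 then (Fintype.card R : ℂ) else 0 :=
    (AddChar.sum_mulShift z hψ).trans (by split_ifs <;> simp)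
  apply Nat.cast_injective (R := ℂ)
  push_cast
  simp only [card_filter, Nat.cast_sum, Nat.cast_ite, Nat.cast_one, Nat.cast_zero, mul_sum,
    mul_boole]
  calc ∑ x : ι → R, (if x ⬝ᵥ c = 0 then (Fintype.card R : ℂ) else 0)
      = ∑ t, ∑ x : ι → R, ∏ i, ψ (x i * (t * c i)) := by
        simp_rw [← orthogonality, dotProduct, mul_sum, ← AddChar.map_sum_eq_prod]
        rw [sum_comm]
        congr! 4 with t x i
        ring
    _ = ∑ t, ∏ i, ∑ u, ψ (u * (t * c i)) := by simp_rw [Fintype.prod_sum]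
    _ = ∑ t, ∏ i, if t * c i = 0 then (Fintype.card R : ℂ) else 0 := by simp_rw [orthogonality]
    _ = _ := by simp_rw [Fintype.prod_ite_zero, prod_const, card_univ]

theorem AddChar.IsPrimitive.card_mul_card_sum_mul_eq_zero {ψ : AddChar R ℂ}
    (hψ : ψ.IsPrimitive) (g : R → R) :
    Fintype.card R * #{xy : (ι → R) × (ι → R) | ∑ i, xy.1 i * g (xy.2 i) = 0} =
      Fintype.card R ^ Fintype.card ι * ∑ t, #{u | t * g u = 0} ^ Fintype.card ι := by
  have fiberwise : #{xy : (ι → R) × (ι → R) | ∑ i, xy.1 i * g (xy.2 i) = 0} =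
      ∑ y : ι → R, #{x : ι → R | x ⬝ᵥ (g ∘ y) = 0} := by
    simp only [card_filter]
    exact Fintype.sum_prod_type_right _
  have annihilators (t : R) :
      #{y : ι → R | ∀ i, t * g (y i) = 0} = #{u | t * g u = 0} ^ Fintype.card ι := by
    rw [← card_univ, ← prod_const, ← Fintype.card_piFinset]
    congr 1
    ext y
    simp [Fintype.mem_piFinset]
  rw [fiberwise, mul_sum]
  simp_rw [hψ.card_mul_card_dotProduct_eq_zero, Function.comp_apply, ← mul_sum,
    ← annihilators, card_filter]
  rw [sum_comm]

theorem mul_natCast_eq_zero_iff_addOrderOf_dvd {R : Type*} [NonAssocRing R] (t : R) (m : ℕ) :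
    t * m = 0 ↔ addOrderOf t ∣ m := by
  rw [← nsmul_eq_mul', addOrderOf_dvd_iff_nsmul_eq_zero]

theorem IsAddCyclic.sum_addOrderOf {G M : Type*} [AddGroup G] [IsAddCyclic G] [Fintype G]
    [AddCommMonoid M] (F : ℕ → M) :
    ∑ g : G, F (addOrderOf g) = ∑ d ∈ (Fintype.card G).divisors, Nat.totient d • F d := by
  classical
  rw [← sum_fiberwise_of_maps_to (g := addOrderOf) (t := (Fintype.card G).divisors)
    fun g _ => Nat.mem_divisors.mpr ⟨addOrderOf_dvd_card, Fintype.card_ne_zero⟩]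
  refine sum_congr rfl fun d hd => ?_
  rw [← IsAddCyclic.card_addOrderOf_eq_totient (Nat.dvd_of_mem_divisors hd), ← sum_const]
  exact sum_congr rfl fun g hg => by rw [(mem_filter.mp hg).2]

theorem ZMod.card_filter_dvd_val {n d : ℕ} [NeZero n] (hd : d ∣ n) :
    #{u : ZMod n | d ∣ u.val} = n / d := by
  let f := (ZMod.castHom hd (ZMod d)).toAddMonoidHom
  have hker (u : ZMod n) : u ∈ f.ker ↔ d ∣ u.val := by
    change ZMod.castHom hd (ZMod d) u = 0 ↔ _
    rw [ZMod.castHom_apply, ZMod.cast_eq_val, ZMod.natCast_eq_zero_iff]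
  have hcard := f.ker.card_mul_index
  rw [AddSubgroup.index_ker, AddMonoidHom.range_eq_top.mpr (ZMod.castHom_surjective hd),
    AddSubgroup.card_top, Nat.card_zmod, Nat.card_zmod, Nat.card_eq_fintype_card,
    Fintype.card_subtype] at hcard
  simp_rw [← hker]
  exact (Nat.div_eq_of_eq_mul_left (Nat.pos_of_dvd_of_pos hd (NeZero.pos n)) hcard.symm).symm

theorem Nat.Prime.pow_dvd_sq_iff {p k b : ℕ} (hp : p.Prime) :
    p ^ k ∣ b ^ 2 ↔ p ^ ((k + 1) / 2) ∣ b := by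
  rcases eq_or_ne b 0 with rfl | hb
  · simp
  rw [hp.pow_dvd_iff_le_factorization hb, hp.pow_dvd_iff_le_factorization (pow_ne_zero 2 hb),
    Nat.factorization_pow]
  simp only [Finsupp.smul_apply, smul_eq_mul]
  omega

theorem ZMod.card_filter_prime_pow_dvd_val_sq {p l k : ℕ} [hp : Fact p.Prime] (hk : k ≤ l) :
    #{u : ZMod (p ^ l) | p ^ k ∣ u.val ^ 2} = p ^ (l - (k + 1) / 2) := by
  simp_rw [hp.out.pow_dvd_sq_iff]
  rw [ZMod.card_filter_dvd_val (pow_dvd_pow p (by omega)), Nat.pow_div (by omega) hp.out.pos]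

theorem card_sum_mul_sq_eq_zero_zmod_prime_pow {p : ℕ} (hp : p.Prime) (l s : ℕ) :
    p ^ l * Nat.card {xy : (Fin s → ZMod (p ^ l)) × (Fin s → ZMod (p ^ l)) //
        ∑ i, xy.1 i * (xy.2 i) ^ 2 = 0} =
      (p ^ l) ^ s * ∑ k ∈ range (l + 1), Nat.totient (p ^ k) * (p ^ (l - (k + 1) / 2)) ^ s := by
  have := Fact.mk hp
  have hcount := (ZMod.isPrimitive_stdAddChar (p ^ l)).card_mul_card_sum_mul_eq_zero
    (ι := Fin s) (fun u => u ^ 2)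
  rw [ZMod.card, Fintype.card_fin] at hcount
  rw [Nat.card_eq_fintype_card, Fintype.card_subtype, hcount]
  congr 1
  have hsq (t u : ZMod (p ^ l)) : t * u ^ 2 = 0 ↔ addOrderOf t ∣ u.val ^ 2 := by
    rw [← mul_natCast_eq_zero_iff_addOrderOf_dvd, Nat.cast_pow, ZMod.natCast_zmod_val]
  simp_rw [hsq]
  rw [IsAddCyclic.sum_addOrderOf (fun d => #{u : ZMod (p ^ l) | d ∣ u.val ^ 2} ^ s), ZMod.card,
    Nat.divisors_prime_pow hp, sum_map]
  refine sum_congr rfl fun k hk => ?_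
  rw [Function.Embedding.coeFn_mk, smul_eq_mul,
    ZMod.card_filter_prime_pow_dvd_val_sq (Nat.lt_succ_iff.mp (mem_range.mp hk))]

noncomputable def localDensityTerm (p s k : ℕ) : ℝ :=
  Nat.totient (p ^ k) / (p : ℝ) ^ (s * ((k + 1) / 2))

section LocalDensityTerm

variable {p : ℕ} (hp : p.Prime) (s : ℕ)
include hp

theorem localDensityTerm_two_mul_add_one (j : ℕ) :
    localDensityTerm p s (2 * j + 1) = (p - 1) / p ^ s * ((p : ℝ) ^ 2 / p ^ s) ^ j := by
  have hq : (p : ℝ) ≠ 0 := by exact_mod_cast hp.ne_zero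
  rw [localDensityTerm, Nat.totient_prime_pow_succ hp, show (2 * j + 1 + 1) / 2 = j + 1 by omega,
    Nat.cast_mul, Nat.cast_pow, Nat.cast_pred hp.pos, div_pow, ← pow_mul, ← pow_mul]
  field_simp
  ring

theorem localDensityTerm_two_mul_add_two (j : ℕ) :
    localDensityTerm p s (2 * j + 2) = (p - 1) * p / p ^ s * ((p : ℝ) ^ 2 / p ^ s) ^ j := by
  have hq : (p : ℝ) ≠ 0 := by exact_mod_cast hp.ne_zero
  rw [localDensityTerm, Nat.totient_prime_pow_succ hp, show (2 * j + 2 + 1) / 2 = j + 1 by omega,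
    Nat.cast_mul, Nat.cast_pow, Nat.cast_pred hp.pos, div_pow, ← pow_mul, ← pow_mul]
  field_simp
  ring

end LocalDensityTerm

theorem hasSum_localDensityTerm {p s : ℕ} (hp : p.Prime) (hs : 3 ≤ s) :
    HasSum (localDensityTerm p s)
      ((1 - (p : ℝ) ^ (-(s : ℤ))) / (1 - (p : ℝ) ^ ((2 : ℤ) - s))) := by
  have hq : (1 : ℝ) < p := by exact_mod_cast hp.one_lt
  have hlt : (p : ℝ) ^ 2 < p ^ s := pow_lt_pow_right₀ hq (by omega)
  have hr : (p : ℝ) ^ 2 / p ^ s < 1 := (div_lt_one (by positivity)).mpr hlt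
  have hgeom := hasSum_geometric_of_lt_one (by positivity) hr
  have htail : HasSum (fun k => localDensityTerm p s (k + 1))
      ((p - 1) / p ^ s * (1 - (p : ℝ) ^ 2 / p ^ s)⁻¹ +
        (p - 1) * p / p ^ s * (1 - (p : ℝ) ^ 2 / p ^ s)⁻¹) := by
    refine HasSum.even_add_odd ?_ ?_
    · simpa only [localDensityTerm_two_mul_add_one hp]
        using hgeom.mul_left (((p : ℝ) - 1) / p ^ s)
    · simpa only [localDensityTerm_two_mul_add_two hp]
        using hgeom.mul_left (((p : ℝ) - 1) * p / p ^ s)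
  have hterm0 : localDensityTerm p s 0 = 1 := by simp [localDensityTerm]
  convert htail.zero_add using 1
  have hne : (p : ℝ) ^ s - p ^ 2 ≠ 0 := (sub_pos.mpr hlt).ne'
  rw [hterm0, zpow_neg, zpow_sub₀ (by positivity), zpow_natCast]
  field_simp
  ring

theorem density_eq_sum_localDensityTerm {p s : ℕ} (hp : p.Prime) (hs : 1 ≤ s) (l : ℕ) :
    ((p : ℝ) ^ ((2 * s - 1) * l))⁻¹ *
        (Nat.card {xy : (Fin s → ZMod (p ^ l)) × (Fin s → ZMod (p ^ l)) //
          ∑ i, xy.1 i * (xy.2 i) ^ 2 = 0} : ℝ) =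
      ∑ k ∈ range (l + 1), localDensityTerm p s k := by
  have hq : (p : ℝ) ≠ 0 := by exact_mod_cast hp.ne_zero
  have hcount := congrArg (Nat.cast : ℕ → ℝ) (card_sum_mul_sq_eq_zero_zmod_prime_pow hp l s)
  push_cast at hcount
  rw [inv_mul_eq_iff_eq_mul₀ (pow_ne_zero _ hq)]
  apply mul_left_cancel₀ (pow_ne_zero l hq)
  rw [hcount, mul_sum, mul_sum, mul_sum]
  refine sum_congr rfl fun k hk => ?_
  obtain ⟨i, hl⟩ : ∃ i, l = (k + 1) / 2 + i :=
    ⟨l - (k + 1) / 2, by have := mem_range.mp hk; omega⟩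
  rw [localDensityTerm, hl, Nat.add_sub_cancel_left]
  generalize (k + 1) / 2 = j
  obtain ⟨s, rfl⟩ := Nat.exists_eq_add_of_le' hs
  rw [show 2 * (s + 1) - 1 = 2 * s + 1 by omega]
  field_simp
  ring

theorem local_density (s : ℕ) (hs : 3 ≤ s) (p : ℕ) (hp : p.Prime) :
    Filter.Tendsto
      (fun l : ℕ => ((p : ℝ) ^ ((2 * s - 1) * l))⁻¹ *
        (Nat.card {xy : (Fin s → ZMod (p ^ l)) × (Fin s → ZMod (p ^ l)) //
          ∑ i, xy.1 i * (xy.2 i) ^ 2 = 0} : ℝ))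
      Filter.atTop
      (nhds ((1 - (p : ℝ) ^ (-(s : ℤ))) / (1 - (p : ℝ) ^ ((2 : ℤ) - s)))) := by
  have hpartial := (hasSum_localDensityTerm hp hs).tendsto_sum_nat.comp
    (Filter.tendsto_add_atTop_nat 1)
  exact hpartial.congr fun l => (density_eq_sum_localDensityTerm hp (by omega) l).symm
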